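/- arXiv:1209.6159 — 5 statements merged into one kernel-verified Lean document; each statement's English description precedes it below -/
import Mathlib

section
/- Let f : ℝ → [0,∞) be right-continuous with left limits everywhere. Define F₊ = {x : f(x) = 0} and F₋ = {x : f(x-) = 0}, where f(x-) denotes the left limit of f at x. Then the set F = F₊ ∪ F₋ is closed in ℝ. -/
/-!
Off `F`, the values `f a` and `f (a-)` are both nonzero. Since `f` is càdlàg, the left-limit
function `Function.leftLim f` has the same one-sided limits as `f` itself: `f a` from the right
and `f (a-)` from the left. Hence `f` and `Function.leftLim f` are both nonzero on a whole
neighbourhood of `a`, so the complement of `F` is open.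
-/

open Filter Set Topology

section LeftLim

variable {α β : Type*} [LinearOrder α] [TopologicalSpace α] [OrderTopology α] [DenselyOrdered α]
  [TopologicalSpace β] {f : α → β}

theorem Function.leftLim_mem_of_mapsTo_Ioo {V : Set β} {a y : α} (hV : IsClosed V) (hay : a < y)
    (hy : Tendsto f (𝓝[<] y) (𝓝 (Function.leftLim f y))) (hf : MapsTo f (Ioo a y) V) :
    Function.leftLim f y ∈ V :=
  haveI := nhdsLT_neBot_of_exists_lt ⟨a, hay⟩
  hV.mem_of_tendsto hy (mem_of_superset (Ioo_mem_nhdsLT hay) hf)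

variable [RegularSpace β] {x : α} {l : β}

theorem Function.tendsto_leftLim_nhdsGT [NoMaxOrder α]
    (hll : ∀ y, Tendsto f (𝓝[<] y) (𝓝 (Function.leftLim f y)))
    (h : Tendsto f (𝓝[>] x) (𝓝 l)) : Tendsto (Function.leftLim f) (𝓝[>] x) (𝓝 l) := by
  refine (closed_nhds_basis l).tendsto_right_iff.2 fun V ⟨hVl, hV⟩ => ?_
  obtain ⟨u, hxu, hu⟩ := mem_nhdsGT_iff_exists_Ioo_subset.1 (h hVl)
  filter_upwards [Ioo_mem_nhdsGT hxu] with y hy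
  exact Function.leftLim_mem_of_mapsTo_Ioo hV hy.1 (hll y) fun z hz => hu ⟨hz.1, hz.2.trans hy.2⟩

theorem Function.tendsto_leftLim_nhdsLT [NoMinOrder α]
    (hll : ∀ y, Tendsto f (𝓝[<] y) (𝓝 (Function.leftLim f y)))
    (h : Tendsto f (𝓝[<] x) (𝓝 l)) : Tendsto (Function.leftLim f) (𝓝[<] x) (𝓝 l) := by
  refine (closed_nhds_basis l).tendsto_right_iff.2 fun V ⟨hVl, hV⟩ => ?_
  obtain ⟨u, hux, hu⟩ := mem_nhdsLT_iff_exists_Ioo_subset.1 (h hVl)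
  filter_upwards [Ioo_mem_nhdsLT hux] with y hy
  exact Function.leftLim_mem_of_mapsTo_Ioo hV hy.1 (hll y) fun z hz => hu ⟨hz.1, hz.2.trans hy.2⟩

end LeftLim

theorem zero_set_union_leftLim_zero_set_isClosed_general
    (f : ℝ → ℝ)
    (hrc : ∀ x, ContinuousWithinAt f (Set.Ici x) x)
    (hll : ∀ x, Tendsto f (nhdsWithin x (Set.Iio x)) (nhds (Function.leftLim f x))) :
    IsClosed ({x : ℝ | f x = 0} ∪ {x : ℝ | Function.leftLim f x = 0}) := by
  rw [← isOpen_compl_iff, compl_union, isOpen_iff_mem_nhds]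
  intro a (ha : f a ≠ 0 ∧ Function.leftLim f a ≠ 0)
  have hgt : Tendsto f (𝓝[>] a) (𝓝 (f a)) :=
    (hrc a).mono_left (nhdsWithin_mono _ Ioi_subset_Ici_self)
  have hne_lt : ∀ᶠ y in 𝓝[<] a, f y ≠ 0 ∧ Function.leftLim f y ≠ 0 :=
    ((hll a).eventually_ne ha.2).and
      ((Function.tendsto_leftLim_nhdsLT hll (hll a)).eventually_ne ha.2)
  have hne_gt : ∀ᶠ y in 𝓝[>] a, f y ≠ 0 ∧ Function.leftLim f y ≠ 0 :=
    (hgt.eventually_ne ha.1).and ((Function.tendsto_leftLim_nhdsGT hll hgt).eventually_ne ha.1)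
  rw [← nhdsNE_sup_pure, ← nhdsLT_sup_nhdsGT]
  exact ⟨⟨hne_lt, hne_gt⟩, ha⟩

/-- For a càdlàg function `f : ℝ → [0,∞)`, the set
`F = {f = 0} ∪ {f(·-) = 0}` is closed. -/
theorem zero_set_union_leftLim_zero_set_isClosed
    (f : ℝ → ℝ) (hnn : ∀ x, 0 ≤ f x)
    (hrc : ∀ x, ContinuousWithinAt f (Set.Ici x) x)
    (hll : ∀ x, Tendsto f (nhdsWithin x (Set.Iio x)) (nhds (Function.leftLim f x))) :
    IsClosed ({x : ℝ | f x = 0} ∪ {x : ℝ | Function.leftLim f x = 0}) :=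
  zero_set_union_leftLim_zero_set_isClosed_general f hrc hll
end

section
/- Let f : ℝ → [0,∞) be right-continuous with left limits, F₊ = {x : f(x) = 0}, F₋ = {x : f(x-) = 0}, F = F₊ ∪ F₋. If x ∈ ℝ is an accumulation point of F from the left (i.e. for every ε > 0 the set F ∩ (x−ε, x) is nonempty), then f(x−) = 0, i.e. x ∈ F₋. -/
open Filter Set

/-- For a càdlàg `f : ℝ → [0,∞)` with `F = {f = 0} ∪ {f(·-) = 0}`:
if `x` is an accumulation point of `F` from the left, then `f(x-) = 0`. -/
theorem leftLim_eq_zero_of_left_accumulation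
    (f : ℝ → ℝ) (hnn : ∀ x, 0 ≤ f x)
    (hrc : ∀ x, ContinuousWithinAt f (Set.Ici x) x)
    (hll : ∀ x, Tendsto f (nhdsWithin x (Set.Iio x)) (nhds (Function.leftLim f x)))
    (x : ℝ)
    (hacc : ∀ ε > (0:ℝ),
      (({y : ℝ | f y = 0} ∪ {y : ℝ | Function.leftLim f y = 0}) ∩
        Set.Ioo (x - ε) x).Nonempty) :
    Function.leftLim f x = 0 := by
  set L := Function.leftLim f x with hL
  have hL0 : 0 ≤ L := ge_of_tendsto (hll x) (Filter.Eventually.of_forall (fun y => hnn y))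
  have key : ∀ ε > (0:ℝ), L < 2 * ε := by
    intro ε hε
    -- eventually f > L - ε near x from the left
    have h1 : ∀ᶠ z in nhdsWithin x (Set.Iio x), L - ε < f z :=
      (hll x).eventually (eventually_gt_nhds (by linarith))
    obtain ⟨u, hu, hsub⟩ := mem_nhdsLT_iff_exists_Ioo_subset.mp h1
    have hux : u < x := hu
    set δ := x - u with hδ
    have hδpos : 0 < δ := by simp [hδ]; linarith
    obtain ⟨y, hyF, hy⟩ := hacc δ hδpos
    have hxu : x - δ = u := by simp [hδ]
    rw [hxu] at hy
    rcases hyF with hy0 | hy0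
    · have := hsub hy
      simp only [Set.mem_setOf_eq] at hy0 this
      rw [hy0] at this
      linarith
    · -- leftLim f y = 0 : find z close to y from left with f z < ε
      simp only [Set.mem_setOf_eq] at hy0
      have h2 : ∀ᶠ z in nhdsWithin y (Set.Iio y), f z < ε := by
        have h4 := hll y
        rw [hy0] at h4
        exact h4.eventually (eventually_lt_nhds hε)
      have h3 : Set.Ioo u y ∈ nhdsWithin y (Set.Iio y) :=
        Ioo_mem_nhdsLT hy.1
      have : ∀ᶠ z in nhdsWithin y (Set.Iio y), f z < ε ∧ z ∈ Set.Ioo u y :=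
        h2.and (eventually_mem_set.mpr h3)
      obtain ⟨z, hz1, hz2⟩ := this.exists
      have hzx : z ∈ Set.Ioo u x := ⟨hz2.1, lt_trans hz2.2 hy.2⟩
      have := hsub hzx
      simp only [Set.mem_setOf_eq] at this
      linarith
  by_contra h
  have hLpos : 0 < L := lt_of_le_of_ne hL0 (Ne.symm h)
  have := key (L / 4) (by linarith)
  linarith
end

section
/- Let f : ℝ → [0,∞) be right-continuous with left limits, with F₊, F₋, F as above. Then F is countable if and only if F₋ is countable. -/
open Filter Set Topology Function

/- A zero of `f` at which the left limit is nonzero is a point of the zero set `{f = 0}` that is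
isolated from the left within that set; in a second-countable order such points are countable.
All other points of `F` already lie in `F₋`. -/

theorem nhdsWithin_preimage_singleton_inter_Iio_eq_bot {α β : Type*} [TopologicalSpace α]
    [Preorder α] [TopologicalSpace β] [T1Space β] {f : α → β} {x : α} {b c : β}
    (hf : Tendsto f (𝓝[<] x) (𝓝 c)) (hcb : c ≠ b) :
    𝓝[f ⁻¹' {b} ∩ Iio x] x = ⊥ := by
  rw [inter_comm, nhdsWithin_inter', inf_principal_eq_bot]
  exact hf.eventually_ne hcb

theorem countable_setOf_eq_diff_setOf_leftLim_eq {α β : Type*}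
    [LinearOrder α] [TopologicalSpace α] [OrderTopology α] [SecondCountableTopology α]
    [TopologicalSpace β] [T1Space β] {f : α → β}
    (hll : ∀ x, Tendsto f (𝓝[<] x) (𝓝 (leftLim f x))) (b : β) :
    ({x | f x = b} \ {x | leftLim f x = b}).Countable := by
  refine (countable_setOfPred_isolated_left_within (s := f ⁻¹' {b})).mono ?_
  rintro x ⟨hfx, hlx⟩
  exact ⟨hfx, nhdsWithin_preimage_singleton_inter_Iio_eq_bot (hll x) hlx⟩

theorem zero_set_countable_iff_leftLim_zero_set_countable_general
    (f : ℝ → ℝ)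
    (hll : ∀ x, Tendsto f (nhdsWithin x (Set.Iio x)) (nhds (Function.leftLim f x))) :
    ({x : ℝ | f x = 0} ∪ {x : ℝ | Function.leftLim f x = 0}).Countable ↔
      {x : ℝ | Function.leftLim f x = 0}.Countable := by
  rw [← sdiff_union_self, countable_union]
  exact and_iff_right (countable_setOf_eq_diff_setOf_leftLim_eq hll 0)

/-- For a càdlàg `f : ℝ → [0,∞)`, with `F₊ = {f = 0}`, `F₋ = {f(·-) = 0}` and
`F = F₊ ∪ F₋`, the set `F` is countable iff `F₋` is countable. -/
theorem zero_set_countable_iff_leftLim_zero_set_countable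
    (f : ℝ → ℝ) (hnn : ∀ x, 0 ≤ f x)
    (hrc : ∀ x, ContinuousWithinAt f (Set.Ici x) x)
    (hll : ∀ x, Tendsto f (nhdsWithin x (Set.Iio x)) (nhds (Function.leftLim f x))) :
    ({x : ℝ | f x = 0} ∪ {x : ℝ | Function.leftLim f x = 0}).Countable ↔
      {x : ℝ | Function.leftLim f x = 0}.Countable :=
  zero_set_countable_iff_leftLim_zero_set_countable_general f hll
end

section
/- Let g : ℝ → [0,∞] be measurable and locally integrable, and define G(x) = ∫₀ˣ g(y) dy (with the sign convention G(x) = −∫ₓ⁰ g for x < 0). Then for every Lebesgue measurable set A ⊆ ℝ, the image G(A) is Lebesgue measurable with λ(G(A)) ≤ ∫_A g dλ. In particular, if λ(A) = 0 and g < ∞ λ-a.e., then G(A) is a Lebesgue null set. -/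
/-!
`G` is the distribution function of the locally finite measure `ν = g λ`: `G b - G a = ν (a, b]`.
So `G` is a Stieltjes function whose Stieltjes measure is `ν`. That measure is the outer measure
obtained from covers by intervals `(a, b]`, and `G` maps such an interval into `[G a, G b]`, of
length `ν (a, b]`; hence `λ (G '' s) ≤ ν s` for every set `s`. Measurability of `G '' A` holds
for the image of a measurable set under any monotone map.
-/

open MeasureTheory

/-- The primitive `G(x) = ∫₀ˣ g(y) dy` of `g : ℝ → [0,∞]`, with the usual
sign convention `G(x) = -∫ₓ⁰ g` for `x < 0`. -/
noncomputable def primG (g : ℝ → ENNReal) (x : ℝ) : ℝ :=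
  (∫⁻ y in Set.Ioc 0 x, g y ∂volume).toReal -
    (∫⁻ y in Set.Ioc x 0, g y ∂volume).toReal

open Set Filter Topology

theorem StieltjesFunction.volume_image_le_measure (f : StieltjesFunction ℝ) (s : Set ℝ) :
    volume (f '' s) ≤ f.measure s := by
  suffices OuterMeasure.comap f volume.toOuterMeasure ≤ f.outer by
    rw [f.measure_def]
    exact this s
  refine OuterMeasure.le_ofFunction.2 fun t => ?_
  rw [OuterMeasure.comap_apply, f.length_eq]
  refine le_iInf₂ fun a b => le_iInf fun hsub => ?_
  calc volume (f '' t) ≤ volume (Icc (f a) (f b)) := by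
        refine measure_mono ?_
        rintro _ ⟨y, hy, rfl⟩
        have hy' := hsub ⟨hy, not_isBot y⟩
        exact ⟨f.mono hy'.1.le, f.mono hy'.2⟩
    _ = ENNReal.ofReal (f b - f a) := Real.volume_Icc

namespace MeasureTheory.Measure

variable (ν : Measure ℝ)

noncomputable def primitive (x : ℝ) : ℝ := ν.real (Ioc 0 x) - ν.real (Ioc x 0)

variable [IsFiniteMeasureOnCompacts ν]

theorem measureReal_Ioc_add_Ioc {a b c : ℝ} (hab : a ≤ b) (hbc : b ≤ c) :
    ν.real (Ioc a b) + ν.real (Ioc b c) = ν.real (Ioc a c) := by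
  rw [← Ioc_union_Ioc_eq_Ioc hab hbc,
    measureReal_union (Ioc_disjoint_Ioc_of_le le_rfl) measurableSet_Ioc measure_Ioc_lt_top.ne
      measure_Ioc_lt_top.ne]

theorem primitive_sub_primitive {a b : ℝ} (hab : a ≤ b) :
    ν.primitive b - ν.primitive a = ν.real (Ioc a b) := by
  simp only [primitive]
  rcases le_total 0 a with h0a | ha0
  · rw [Ioc_eq_empty_of_le h0a, Ioc_eq_empty_of_le (h0a.trans hab),
      ← ν.measureReal_Ioc_add_Ioc h0a hab]
    simp
  rcases le_total b 0 with hb0 | h0b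
  · rw [Ioc_eq_empty_of_le (hab.trans hb0), Ioc_eq_empty_of_le hb0,
      ← ν.measureReal_Ioc_add_Ioc hab hb0]
    simp
  · rw [Ioc_eq_empty_of_le ha0, Ioc_eq_empty_of_le h0b, ← ν.measureReal_Ioc_add_Ioc ha0 h0b]
    simp only [measureReal_empty]
    ring

theorem monotone_primitive : Monotone ν.primitive := fun _ _ hab =>
  sub_nonneg.1 <| (ν.primitive_sub_primitive hab).symm ▸ measureReal_nonneg

theorem tendsto_measure_Ioc_nhdsGT (x : ℝ) :
    Tendsto (fun y => ν (Ioc x y)) (𝓝[>] x) (𝓝 0) := by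
  have h := tendsto_measure_biInter_gt (μ := ν) (s := Ioc x) (a := x)
    (fun _ _ => measurableSet_Ioc.nullMeasurableSet) (fun _ _ _ hij => Ioc_subset_Ioc_right hij)
    ⟨x + 1, by linarith, measure_Ioc_lt_top.ne⟩
  have hempty : ⋂ y > x, Ioc x y = ∅ := by
    refine eq_empty_of_forall_notMem fun z hz => ?_
    have hxz := (mem_iInter₂.1 hz (x + 1) (by linarith)).1
    obtain ⟨y, hxy, hyz⟩ := exists_between hxz
    exact hyz.not_ge (mem_iInter₂.1 hz y hxy).2
  rwa [hempty, measure_empty] at h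

theorem continuousWithinAt_primitive_Ici (x : ℝ) : ContinuousWithinAt ν.primitive (Ici x) x := by
  rw [← continuousWithinAt_Ioi_iff_Ici, ContinuousWithinAt]
  have h := ((ENNReal.tendsto_toReal ENNReal.zero_ne_top).comp
    (ν.tendsto_measure_Ioc_nhdsGT x)).const_add (ν.primitive x)
  rw [ENNReal.toReal_zero, add_zero] at h
  refine h.congr' (eventually_nhdsWithin_of_forall fun y hy => ?_)
  simp only [Function.comp_apply, ← measureReal_def, ← ν.primitive_sub_primitive (le_of_lt hy)]
  ring

noncomputable def primitiveStieltjes : StieltjesFunction ℝ where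
  toFun := ν.primitive
  mono' := ν.monotone_primitive
  right_continuous' := ν.continuousWithinAt_primitive_Ici

theorem measure_primitiveStieltjes : ν.primitiveStieltjes.measure = ν := by
  refine ext_of_Ioc _ _ fun a b hab => ?_
  rw [StieltjesFunction.measure_Ioc]
  exact (ν.primitive_sub_primitive hab.le).symm ▸ ofReal_measureReal measure_Ioc_lt_top.ne

end MeasureTheory.Measure

theorem isFiniteMeasureOnCompacts_withDensity {α : Type*} [MeasurableSpace α]
    [TopologicalSpace α] {μ : Measure α} [SFinite μ] {g : α → ENNReal}
    (hg : ∀ K : Set α, IsCompact K → ∫⁻ x in K, g x ∂μ < ⊤) :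
    IsFiniteMeasureOnCompacts (μ.withDensity g) :=
  ⟨fun K hK => (withDensity_apply' (μ := μ) g K).symm ▸ hg K hK⟩

theorem primG_eq_primitive (g : ℝ → ENNReal) : primG g = (volume.withDensity g).primitive := by
  ext x
  simp only [primG, Measure.primitive, measureReal_def, withDensity_apply _ measurableSet_Ioc]

theorem volume_image_primG_le_general
    (g : ℝ → ENNReal)
    (hloc : ∀ K : Set ℝ, IsCompact K → ∫⁻ x in K, g x ∂volume < ⊤) :
    ∀ A : Set ℝ, MeasurableSet A →
      NullMeasurableSet (primG g '' A) volume ∧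
      volume (primG g '' A) ≤ ∫⁻ x in A, g x ∂volume ∧
      ((∀ᵐ x ∂volume, g x ≠ ⊤) → volume A = 0 → volume (primG g '' A) = 0) := by
  intro A hA
  set ν := volume.withDensity g
  have : IsFiniteMeasureOnCompacts ν := isFiniteMeasureOnCompacts_withDensity hloc
  have hbound : volume (primG g '' A) ≤ ∫⁻ x in A, g x := calc
    volume (primG g '' A) = volume (ν.primitiveStieltjes '' A) := by rw [primG_eq_primitive]; rfl
    _ ≤ ν.primitiveStieltjes.measure A := ν.primitiveStieltjes.volume_image_le_measure A
    _ = ∫⁻ x in A, g x := by rw [ν.measure_primitiveStieltjes, withDensity_apply _ hA]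
  refine ⟨?_, hbound, fun _ hA0 => ?_⟩
  · rw [primG_eq_primitive]
    exact (hA.image_of_monotoneOn (ν.monotone_primitive.monotoneOn A)).nullMeasurableSet
  · exact le_antisymm (hbound.trans (setLIntegral_measure_zero A g hA0).le) bot_le

/-- For `g : ℝ → [0,∞]` measurable and locally integrable with primitive `G`,
the image `G(A)` of any measurable set `A` is (null) measurable with
`λ(G(A)) ≤ ∫_A g dλ`; in particular if `λ(A) = 0` and `g < ∞` a.e. then
`G(A)` is null. -/
theorem volume_image_primG_le
    (g : ℝ → ENNReal) (hmeas : Measurable g)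
    (hloc : ∀ K : Set ℝ, IsCompact K → ∫⁻ x in K, g x ∂volume < ⊤) :
    ∀ A : Set ℝ, MeasurableSet A →
      NullMeasurableSet (primG g '' A) volume ∧
      volume (primG g '' A) ≤ ∫⁻ x in A, g x ∂volume ∧
      ((∀ᵐ x ∂volume, g x ≠ ⊤) → volume A = 0 → volume (primG g '' A) = 0) :=
  volume_image_primG_le_general g hloc
end

section
/- Let f be a drift function, G(x) = ∫₀ˣ (1/f)(y) dy, and let H : (G(−∞), G(+∞)) → ℝ be the inverse of G. Then H satisfies H(x) = ∫₀ˣ (f ∘ H)(y) dy for all x ∈ (G(−∞), G(+∞)). -/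
/-!
`G = primInv f` is the distribution function of the Radon measure `μ = (1/f) · λ`, and a continuous
strictly increasing distribution function pushes its measure forward to Lebesgue measure:
`G_* (μ|(a, b]) = λ|(G a, G b]`. Hence `∫_{G a}^{G b} f ∘ H = ∫_{(a, b]} f ∘ H ∘ G dμ
= ∫_{(a, b]} f · (1/f) dλ = b - a`, where `f · (1/f) = 1` a.e. because local integrability of
`1/f` forces `f > 0` a.e.
-/

open MeasureTheory

/-- The primitive `G(x) = ∫₀ˣ (1/f)(y) dy` of the reciprocal of a drift
function `f` (with the convention `1/0 = ∞`). -/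
noncomputable def primInv (f : ℝ → ℝ) (x : ℝ) : ℝ :=
  (∫⁻ y in Set.Ioc 0 x, (ENNReal.ofReal (f y))⁻¹ ∂volume).toReal -
    (∫⁻ y in Set.Ioc x 0, (ENNReal.ofReal (f y))⁻¹ ∂volume).toReal

open Set

theorem LocallyBoundedVariationOn.measurable {α : Type*} [LinearOrder α] [TopologicalSpace α]
    [OrderClosedTopology α] [MeasurableSpace α] [BorelSpace α] {f : α → ℝ}
    (hf : LocallyBoundedVariationOn f univ) : Measurable f := by
  obtain ⟨p, q, hp, hq, rfl⟩ := hf.exists_monotoneOn_sub_monotoneOn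
  exact (monotoneOn_univ.1 hp).measurable.sub (monotoneOn_univ.1 hq).measurable

section ChangeOfVariables

variable {μ : Measure ℝ} {G : ℝ → ℝ} {a b : ℝ}

lemma exists_preimage_Iic_inter_Ioc_eq (hG : Continuous G) (hGm : StrictMono G) (hab : a ≤ b)
    (c : ℝ) : ∃ u, a ≤ u ∧ G ⁻¹' Iic c ∩ Ioc a b = Ioc a u ∧
      Iic c ∩ Ioc (G a) (G b) = Ioc (G a) (G u) := by
  rcases lt_or_ge c (G a) with hca | hac
  · refine ⟨a, le_rfl, ?_, ?_⟩ <;> rw [Ioc_self, eq_empty_iff_forall_notMem]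
    · exact fun s ⟨hsc, has, _⟩ => (hGm has).not_ge (le_trans hsc hca.le)
    · exact fun y ⟨hyc, hay, _⟩ => hay.not_ge (le_trans hyc hca.le)
  rcases le_or_gt (G b) c with hbc | hcb
  · exact ⟨b, hab, inter_eq_right.2 fun s hs => (hGm.monotone hs.2).trans hbc,
      inter_eq_right.2 fun y hy => hy.2.trans hbc⟩
  obtain ⟨u, ⟨hau, hub⟩, rfl⟩ := intermediate_value_Icc hab hG.continuousOn ⟨hac, hcb.le⟩
  refine ⟨u, hau, ?_, ?_⟩
  · rw [show G ⁻¹' Iic (G u) = Iic u from ext fun s => hGm.le_iff_le, Iic_inter_Ioc_of_le hub]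
  · exact Iic_inter_Ioc_of_le (hGm.monotone hub)

theorem map_restrict_Ioc_of_measure_Ioc (hG : Continuous G) (hGm : StrictMono G)
    (hμ : ∀ a b, a ≤ b → μ (Ioc a b) = ENNReal.ofReal (G b - G a)) (hab : a ≤ b) :
    (μ.restrict (Ioc a b)).map G = volume.restrict (Ioc (G a) (G b)) := by
  refine (Measure.ext_of_Iic _ _ fun c => ?_).symm
  obtain ⟨u, hau, hpre, himg⟩ := exists_preimage_Iic_inter_Ioc_eq hG hGm hab c
  rw [Measure.map_apply hG.measurable measurableSet_Iic,
    Measure.restrict_apply (hG.measurable measurableSet_Iic), hpre,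
    Measure.restrict_apply measurableSet_Iic, himg, Real.volume_Ioc, hμ a u hau]

theorem integral_comp_of_measure_Ioc {E : Type*} [NormedAddCommGroup E] [NormedSpace ℝ E]
    (hG : Continuous G) (hGm : StrictMono G)
    (hμ : ∀ a b, a ≤ b → μ (Ioc a b) = ENNReal.ofReal (G b - G a)) (hab : a ≤ b) (φ : ℝ → E) :
    ∫ s in Ioc a b, φ (G s) ∂μ = ∫ y in Ioc (G a) (G b), φ y := by
  rw [← map_restrict_Ioc_of_measure_Ioc hG hGm hμ hab,
    (hG.measurableEmbedding hGm.injective).integral_map]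

end ChangeOfVariables

section ReciprocalMeasure

variable {f : ℝ → ℝ} {a b : ℝ}

noncomputable abbrev reciprocalMeasure (f : ℝ → ℝ) : Measure ℝ :=
  volume.withDensity fun y => (ENNReal.ofReal (f y))⁻¹

lemma isFiniteMeasureOnCompacts_reciprocalMeasure
    (hint : ∀ K : Set ℝ, IsCompact K → ∫⁻ x in K, (ENNReal.ofReal (f x))⁻¹ ∂volume < ⊤) :
    IsFiniteMeasureOnCompacts (reciprocalMeasure f) :=
  ⟨fun K hK => by rw [withDensity_apply' _ K]; exact hint K hK⟩

lemma primInv_eq_intervalIntegral (f : ℝ → ℝ) (t : ℝ) :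
    primInv f t = ∫ _ in 0..t, (1 : ℝ) ∂reciprocalMeasure f := by
  rw [intervalIntegral.integral_const', smul_eq_mul, mul_one, measureReal_def, measureReal_def,
    withDensity_apply _ measurableSet_Ioc, withDensity_apply _ measurableSet_Ioc, primInv]

variable [IsFiniteMeasureOnCompacts (reciprocalMeasure f)]

lemma primInv_sub_primInv (hab : a ≤ b) :
    primInv f b - primInv f a = (reciprocalMeasure f).real (Ioc a b) := by
  rw [primInv_eq_intervalIntegral, primInv_eq_intervalIntegral,
    intervalIntegral.integral_interval_sub_left intervalIntegrable_const intervalIntegrable_const,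
    intervalIntegral.integral_const', Ioc_eq_empty_of_le hab, measureReal_empty, sub_zero,
    smul_eq_mul, mul_one]

lemma reciprocalMeasure_Ioc (hab : a ≤ b) :
    reciprocalMeasure f (Ioc a b) = ENNReal.ofReal (primInv f b - primInv f a) := by
  rw [primInv_sub_primInv hab, measureReal_def, ENNReal.ofReal_toReal measure_Ioc_lt_top.ne]

lemma monotone_primInv : Monotone (primInv f) := fun _ _ hab =>
  sub_nonneg.1 ((primInv_sub_primInv (f := f) hab).symm ▸ measureReal_nonneg)

lemma continuous_primInv : Continuous (primInv f) := by
  rw [funext (primInv_eq_intervalIntegral f)]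
  exact intervalIntegral.continuous_primitive
      (fun _ _ => intervalIntegrable_const (c := (1 : ℝ)) (μ := reciprocalMeasure f)) 0

lemma setIntegral_reciprocalMeasure (hf : Measurable f) (hab : a ≤ b) :
    ∫ s in Ioc a b, f s ∂reciprocalMeasure f = b - a := by
  have hd : Measurable fun y => (ENNReal.ofReal (f y))⁻¹ := hf.ennreal_ofReal.inv
  have hfin : ∀ᵐ s ∂volume.restrict (Ioc a b), (ENNReal.ofReal (f s))⁻¹ < ⊤ := by
    refine ae_lt_top hd ?_
    rw [← withDensity_apply _ measurableSet_Ioc]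
    exact measure_Ioc_lt_top.ne
  rw [setIntegral_withDensity_eq_setIntegral_toReal_smul hd hfin _ measurableSet_Ioc]
  calc _ = ∫ _ in Ioc a b, (1 : ℝ) := by
        refine setIntegral_congr_ae measurableSet_Ioc ?_
        filter_upwards [(ae_restrict_iff' measurableSet_Ioc).1 hfin] with s hs hsab
        have hpos : 0 < f s :=
          ENNReal.ofReal_pos.1 (pos_iff_ne_zero.2 (ENNReal.inv_lt_top.1 (hs hsab)).ne')
        rw [ENNReal.toReal_inv, ENNReal.toReal_ofReal hpos.le, smul_eq_mul,
          inv_mul_cancel₀ hpos.ne']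
    _ = b - a := by simp [hab]

end ReciprocalMeasure

theorem inverse_primInv_integral_representation_general
    (f : ℝ → ℝ)
    (hbv : LocallyBoundedVariationOn f Set.univ)
    (hint : ∀ K : Set ℝ, IsCompact K →
      ∫⁻ x in K, (ENNReal.ofReal (f x))⁻¹ ∂volume < ⊤)
    (H : ℝ → ℝ) (hH : ∀ t, H (primInv f t) = t) :
    ∀ x ∈ Set.range (primInv f), H x = ∫ y in (0:ℝ)..x, f (H y) := by
  have := isFiniteMeasureOnCompacts_reciprocalMeasure hint
  have hGm : StrictMono (primInv f) :=
    monotone_primInv.strictMono_of_injective (Function.LeftInverse.injective hH)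
  have key : ∀ a b, a ≤ b → ∫ y in Ioc (primInv f a) (primInv f b), f (H y) = b - a := by
    intro a b hab
    rw [← integral_comp_of_measure_Ioc continuous_primInv hGm
      (fun _ _ => reciprocalMeasure_Ioc) hab]
    simpa only [hH] using setIntegral_reciprocalMeasure hbv.measurable hab
  have hG0 : primInv f 0 = 0 := by simp [primInv]
  rintro _ ⟨t, rfl⟩
  rw [hH, ← hG0]
  rcases le_total 0 t with ht | ht
  · rw [intervalIntegral.integral_of_le (hGm.monotone ht), key 0 t ht, sub_zero]
  · rw [intervalIntegral.integral_symm, intervalIntegral.integral_of_le (hGm.monotone ht),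
      key t 0 ht, zero_sub, neg_neg]

/-- If `H` is the inverse of `G = primInv f` on `G(ℝ) = (G(-∞), G(+∞))`
(the range of `G`), then `H(x) = ∫₀ˣ f(H(y)) dy` on `G(ℝ)`. -/
theorem inverse_primInv_integral_representation
    (f : ℝ → ℝ) (hnn : ∀ x, 0 ≤ f x)
    (hrc : ∀ x, ContinuousWithinAt f (Set.Ici x) x)
    (hbv : LocallyBoundedVariationOn f Set.univ)
    (hint : ∀ K : Set ℝ, IsCompact K →
      ∫⁻ x in K, (ENNReal.ofReal (f x))⁻¹ ∂volume < ⊤)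
    (H : ℝ → ℝ) (hH : ∀ t, H (primInv f t) = t) :
    ∀ x ∈ Set.range (primInv f), H x = ∫ y in (0:ℝ)..x, f (H y) :=
  inverse_primInv_integral_representation_general f hbv hint H hH
end
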